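/- arXiv:1208.2888 — 2 statements merged into one kernel-verified Lean document; each statement's English description precedes it below -/
import Mathlib

section
/- Let t ∈ ℝ and θ ∈ Θ. If φ_t(θ) > 0 (i.e. θ ∉ N_t), then Γ(θ) ≥ t. Equivalently: if Γ(θ) < t then φ_t(θ) = 0. -/
open MeasureTheory Filter Topology

/-- The general setting of the paper: a measurable base system with invertible
driving map `T`, a concave fibre function `h` (with its derivative `h'` on `[0,∞)`)
and a bounded measurable positive function `g`. -/
structure Setting (Θ : Type*) [MeasurableSpace Θ] where
  T : Θ → Θ
  Tinv : Θ → Θ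
  left_inv : Function.LeftInverse Tinv T
  right_inv : Function.RightInverse Tinv T
  T_meas : Measurable T
  Tinv_meas : Measurable Tinv
  h : ℝ → ℝ
  h' : ℝ → ℝ
  h_hasDeriv : ∀ x ∈ Set.Ici (0 : ℝ), HasDerivWithinAt h (h' x) (Set.Ici 0) x
  h'_cont : ContinuousOn h' (Set.Ici 0)
  h_strictConcave : StrictConcaveOn ℝ (Set.Ici 0) h
  h_zero : h 0 = 0
  h'_pos : ∀ x : ℝ, 0 < x → 0 < h' x
  h'_zero : h' 0 = 1
  h_sublinear : Tendsto (fun x => h x / x) atTop (𝓝 0)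
  g : Θ → ℝ
  g_pos : ∀ θ, 0 < g θ
  g_bdd : ∃ C : ℝ, ∀ θ, g θ ≤ C
  g_meas : Measurable g

namespace Setting

variable {Θ : Type*} [MeasurableSpace Θ]

/-- The fibre maps `f_t(θ,x) = e^{-t} g(θ) h(x)`. -/
noncomputable def f (S : Setting Θ) (t : ℝ) (θ : Θ) (x : ℝ) : ℝ :=
  Real.exp (-t) * S.g θ * S.h x

/-- The iterated fibre maps: `fn t 0 θ x = x` and
`fn t (n+1) θ x = f t (T^[n] θ) (fn t n θ x)`, so that `fn t 1 = f t`. -/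
noncomputable def fn (S : Setting Θ) (t : ℝ) : ℕ → Θ → ℝ → ℝ
  | 0, _, x => x
  | n + 1, θ, x => S.f t (S.T^[n] θ) (S.fn t n θ x)

/-- `ψ_{t,n}(θ) = f_t^n(T^{-n}θ, M)`. -/
noncomputable def ψ (S : Setting Θ) (t M : ℝ) (n : ℕ) (θ : Θ) : ℝ :=
  S.fn t n (S.Tinv^[n] θ) M

/-- The maximal invariant function `φ_t(θ) = inf_{n ≥ 1} ψ_{t,n}(θ)`. -/
noncomputable def φ (S : Setting Θ) (t M : ℝ) (θ : Θ) : ℝ :=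
  ⨅ n : ℕ, S.ψ t M (n + 1) θ

/-- The zero set `N_t = {θ : φ_t(θ) = 0}`. -/
noncomputable def Nset (S : Setting Θ) (t M : ℝ) : Set Θ := {θ | S.φ t M θ = 0}

/-- The critical parameter `t_c(θ) = inf {t : φ_t(θ) = 0}`. -/
noncomputable def tc (S : Setting Θ) (M : ℝ → ℝ) (θ : Θ) : ℝ :=
  sInf {t : ℝ | S.φ t (M t) θ = 0}

/-- The bifurcation set `S_t = {θ : t_c(θ) = t}`. -/
noncomputable def Sset (S : Setting Θ) (M : ℝ → ℝ) (t : ℝ) : Set Θ :=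
  {θ | S.tc M θ = t}

/-- The Birkhoff average `Γ^{(n)}(θ) = (1/n) ∑_{k=1}^n log g(T^{-k}θ)`. -/
noncomputable def Γn (S : Setting Θ) (n : ℕ) (θ : Θ) : ℝ :=
  (∑ k ∈ Finset.range n, Real.log (S.g (S.Tinv^[k + 1] θ))) / n

/-- The lower backwards Lyapunov average `Γ(θ) = liminf_n Γ^{(n)}(θ)`. -/
noncomputable def Γ (S : Setting Θ) (θ : Θ) : ℝ :=
  Filter.liminf (fun n : ℕ => S.Γn n θ) Filter.atTop

/-- The averaged exponent `γ(μ) = ∫ log g dμ`. -/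
noncomputable def γfn (S : Setting Θ) (μ : Measure Θ) : ℝ :=
  ∫ θ, Real.log (S.g θ) ∂μ

/-- The function `H(x) = log (h(x)/x)`. -/
noncomputable def Hfn (S : Setting Θ) (x : ℝ) : ℝ := Real.log (S.h x / x)

end Setting

/-
Concavity and `h'(0) = 1` give `h(x) ≤ x` on `[0, ∞)`, so each step of the fibre dynamics
multiplies by at most `e^{-t} g`, whence `0 ≤ ψ_{t,n}(θ) ≤ M e^{n (Γ^{(n)}(θ) - t)}`. If
`Γ(θ) < t`, this bound tends to `0` along the infinitely many `n` with `Γ^{(n)}(θ) < s < t`,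
forcing `φ_t(θ) = 0`.
-/

namespace Setting

variable {Θ : Type*} [MeasurableSpace Θ] (S : Setting Θ)

lemma h_nonneg {x : ℝ} (hx : 0 ≤ x) : 0 ≤ S.h x := by
  have hmono : MonotoneOn S.h (Set.Ici 0) := by
    refine monotoneOn_of_hasDerivWithinAt_nonneg (f' := S.h') (convex_Ici 0)
      (fun x hx => (S.h_hasDeriv x hx).continuousWithinAt) (fun x hx => ?_) (fun x hx => ?_)
    · exact (S.h_hasDeriv x (interior_subset hx)).mono interior_subset
    · rw [interior_Ici] at hx
      exact (S.h'_pos x hx).le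
  simpa [S.h_zero] using hmono Set.self_mem_Ici (Set.mem_Ici.2 hx) hx

lemma h_le_self {x : ℝ} (hx : 0 ≤ x) : S.h x ≤ x := by
  rcases hx.eq_or_lt with rfl | hx
  · simp [S.h_zero]
  have hslope : slope S.h 0 x ≤ 1 := S.h'_zero ▸
    S.h_strictConcave.concaveOn.slope_le_of_hasDerivWithinAt Set.self_mem_Ici hx.le hx
      (S.h_hasDeriv 0 Set.self_mem_Ici)
  rwa [slope_def_field, S.h_zero, sub_zero, sub_zero, div_le_one hx] at hslope

lemma fn_nonneg (t : ℝ) {x : ℝ} (hx : 0 ≤ x) (θ : Θ) : ∀ n, 0 ≤ S.fn t n θ x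
  | 0 => hx
  | n + 1 => by
    have := S.h_nonneg (fn_nonneg t hx θ n)
    have := S.g_pos (S.T^[n] θ)
    simp only [fn, f]
    positivity

lemma fn_le_prod_mul (t : ℝ) {x : ℝ} (hx : 0 ≤ x) (θ : Θ) :
    ∀ n, S.fn t n θ x ≤ (∏ k ∈ Finset.range n, Real.exp (-t) * S.g (S.T^[k] θ)) * x
  | 0 => by simp [fn]
  | n + 1 => by
    have hfactor : 0 ≤ Real.exp (-t) * S.g (S.T^[n] θ) := by
      have := S.g_pos (S.T^[n] θ)
      positivity
    calc S.fn t (n + 1) θ x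
        ≤ Real.exp (-t) * S.g (S.T^[n] θ) * S.fn t n θ x :=
          mul_le_mul_of_nonneg_left (S.h_le_self (S.fn_nonneg t hx θ n)) hfactor
      _ ≤ Real.exp (-t) * S.g (S.T^[n] θ) *
            ((∏ k ∈ Finset.range n, Real.exp (-t) * S.g (S.T^[k] θ)) * x) :=
          mul_le_mul_of_nonneg_left (fn_le_prod_mul t hx θ n) hfactor
      _ = _ := by rw [Finset.prod_range_succ]; ring

lemma T_iterate_Tinv_iterate {k n : ℕ} (hkn : k ≤ n) (θ : Θ) :
    S.T^[k] (S.Tinv^[n] θ) = S.Tinv^[n - k] θ := by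
  obtain ⟨m, rfl⟩ := Nat.exists_eq_add_of_le hkn
  rw [Function.iterate_add_apply, S.right_inv.iterate k, Nat.add_sub_cancel_left]

lemma prod_range_T_iterate_Tinv_iterate {β : Type*} [CommMonoid β] (F : Θ → β) (n : ℕ)
    (θ : Θ) :
    ∏ k ∈ Finset.range n, F (S.T^[k] (S.Tinv^[n] θ)) =
      ∏ k ∈ Finset.range n, F (S.Tinv^[k + 1] θ) := by
  rw [← Finset.prod_range_reflect (fun k => F (S.Tinv^[k + 1] θ)) n]
  refine Finset.prod_congr rfl fun k hk => ?_
  have hk : k < n := Finset.mem_range.mp hk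
  rw [S.T_iterate_Tinv_iterate hk.le]
  congr 2
  omega

lemma sum_log_g_eq_mul_Γn (n : ℕ) (θ : Θ) :
    ∑ k ∈ Finset.range n, Real.log (S.g (S.Tinv^[k + 1] θ)) = n * S.Γn n θ := by
  rcases n.eq_zero_or_pos with rfl | hn
  · simp
  · rw [Γn, mul_div_cancel₀ _ (by positivity)]

lemma ψ_nonneg (t : ℝ) {M : ℝ} (hM : 0 ≤ M) (n : ℕ) (θ : Θ) : 0 ≤ S.ψ t M n θ :=
  S.fn_nonneg t hM _ n

lemma ψ_le_exp (t : ℝ) {M : ℝ} (hM : 0 ≤ M) (n : ℕ) (θ : Θ) :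
    S.ψ t M n θ ≤ M * Real.exp (n * (S.Γn n θ - t)) := by
  have hprod : ∏ k ∈ Finset.range n, Real.exp (-t) * S.g (S.T^[k] (S.Tinv^[n] θ)) =
      Real.exp (n * (S.Γn n θ - t)) := by
    rw [S.prod_range_T_iterate_Tinv_iterate (fun θ' => Real.exp (-t) * S.g θ'), mul_sub,
      ← S.sum_log_g_eq_mul_Γn, show (n : ℝ) * t = ∑ _k ∈ Finset.range n, t by simp,
      ← Finset.sum_sub_distrib, Real.exp_sum]
    refine Finset.prod_congr rfl fun k _ => ?_
    rw [Real.exp_sub, Real.exp_log (S.g_pos _), Real.exp_neg, div_eq_mul_inv, mul_comm]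
  calc S.ψ t M n θ ≤ _ := S.fn_le_prod_mul t hM _ n
    _ = M * Real.exp (n * (S.Γn n θ - t)) := by rw [hprod, mul_comm]

lemma isBoundedUnder_le_Γn (θ : Θ) : IsBoundedUnder (· ≤ ·) atTop (fun n => S.Γn n θ) := by
  obtain ⟨C, hC⟩ := S.g_bdd
  refine isBoundedUnder_of_eventually_le (a := Real.log C) ?_
  filter_upwards [eventually_gt_atTop 0] with n hn
  rw [Γn, div_le_iff₀ (by positivity)]
  calc ∑ k ∈ Finset.range n, Real.log (S.g (S.Tinv^[k + 1] θ))
      ≤ ∑ _k ∈ Finset.range n, Real.log C :=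
        Finset.sum_le_sum fun k _ => Real.log_le_log (S.g_pos _) (hC _)
    _ = Real.log C * n := by simp [mul_comm]

lemma frequently_Γn_lt {θ : Θ} {s : ℝ} (h : S.Γ θ < s) : ∃ᶠ n in atTop, S.Γn n θ < s :=
  frequently_lt_of_liminf_lt (S.isBoundedUnder_le_Γn θ).isCoboundedUnder_ge h

lemma φ_nonneg (t : ℝ) {M : ℝ} (hM : 0 ≤ M) (θ : Θ) : 0 ≤ S.φ t M θ :=
  le_ciInf fun n => S.ψ_nonneg t hM (n + 1) θ

lemma φ_le_ψ (t : ℝ) {M : ℝ} (hM : 0 ≤ M) {n : ℕ} (hn : 0 < n) (θ : Θ) :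
    S.φ t M θ ≤ S.ψ t M n θ := by
  obtain ⟨m, rfl⟩ := Nat.exists_eq_add_one_of_ne_zero hn.ne'
  exact ciInf_le ⟨0, Set.forall_mem_range.2 fun k => S.ψ_nonneg t hM (k + 1) θ⟩ m

lemma φ_eq_zero_of_Γ_lt {t M : ℝ} (hM : 0 ≤ M) {θ : Θ} (h : S.Γ θ < t) : S.φ t M θ = 0 := by
  obtain ⟨s, hΓs, hst⟩ := exists_between h
  have hdecay : Tendsto (fun n : ℕ => M * Real.exp (n * (s - t))) atTop (𝓝 0) := by
    simpa using ((Real.tendsto_exp_atBot.comp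
      (tendsto_natCast_atTop_atTop.atTop_mul_const_of_neg (sub_neg.2 hst))).const_mul M)
  have hfreq : ∃ᶠ n : ℕ in atTop, S.φ t M θ ≤ M * Real.exp (n * (s - t)) :=
    ((S.frequently_Γn_lt hΓs).and_eventually (eventually_gt_atTop 0)).mono
      fun n ⟨hΓn, hn⟩ => (S.φ_le_ψ t hM hn θ).trans <| (S.ψ_le_exp t hM n θ).trans <| by
        gcongr
  exact le_antisymm (ge_of_tendsto_of_frequently hdecay hfreq) (S.φ_nonneg t hM θ)

end Setting

theorem stmt4_general {Θ : Type*} [MeasurableSpace Θ] (S : Setting Θ) (t M : ℝ)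
    (hM : 0 < M) (θ : Θ) :
    (0 < S.φ t M θ → t ≤ S.Γ θ) ∧ (S.Γ θ < t → S.φ t M θ = 0) :=
  ⟨fun hφ => not_lt.1 fun hΓ => hφ.ne' (S.φ_eq_zero_of_Γ_lt hM.le hΓ),
    S.φ_eq_zero_of_Γ_lt hM.le⟩

/-- if `φ_t(θ) > 0` (i.e. `θ ∉ N_t`) then `Γ(θ) ≥ t`; equivalently,
if `Γ(θ) < t` then `φ_t(θ) = 0`. -/
theorem stmt4 {Θ : Type*} [MeasurableSpace Θ] (S : Setting Θ) (t M : ℝ)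
    (hM : 0 < M) (hMf : ∀ θ, S.f t θ M < M) (θ : Θ) :
    (0 < S.φ t M θ → t ≤ S.Γ θ) ∧ (S.Γ θ < t → S.φ t M θ = 0) :=
  stmt4_general S t M hM θ
end

section
/- Assume in addition that h is twice differentiable at 0 with h''(0) < 0. Then for every t ∈ ℝ and every T-invariant probability measure μ on (Θ, 𝓑) one has μ(S_t \ N_t) = 0. -/
open MeasureTheory Filter Topology

/-!
On `A = {θ | φ_t(θ) ≠ 0 ∧ ∀ s > t, φ_s(θ) = 0}`, which contains `S_t \ N_t` and is invariant,
the relation `φ_t(θ) = f_t(T⁻¹θ, φ_t(T⁻¹θ))` yields the cocycle identity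
`log φ_t = log φ_t ∘ T⁻¹ + (log g ∘ T⁻¹ - t) - W`, where `W = -H(φ_t ∘ T⁻¹)` takes values in
`(0, -H(M_t)]` on `A`. If the Birkhoff sums of `W` along the backward orbit of a point of `A`
grew like `ε n`, the backward sums of `log g` would beat `(t + ε) n` up to a constant; since
`h(x) ≥ e^{-ε/2} x` near `0`, this keeps every `ψ_{t+ε/2,n}` above a positive constant, so
`φ_{t+ε/2} ≠ 0`, which is impossible on `A`. Hence the Birkhoff averages of `W` have
`liminf = 0` everywhere, and a stopping-time argument for the measure-preserving map `T⁻¹`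
gives `∫ W dμ = 0`. As `W > 0` on `A`, `μ(A) = 0`.
-/

section StoppingTime

variable {α : Type*} {f : α → α} {u : α → ℝ} {K c : ℝ} {N : ℕ}

theorem birkhoffSum_le_mul_add_of_exists_le (hu0 : ∀ x, 0 ≤ u x) (huK : ∀ x, u x ≤ K)
    (hc : 0 ≤ c) (hstop : ∀ x, u x ≠ 0 → ∃ m, 0 < m ∧ m ≤ N ∧ birkhoffSum f u m x ≤ c * m)
    (L : ℕ) (x : α) : birkhoffSum f u L x ≤ c * L + N * K := by
  have hK : 0 ≤ K := (hu0 x).trans (huK x)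
  induction L using Nat.strong_induction_on generalizing x with
  | _ L ih =>
  by_cases hx : u x = 0
  · rcases L with _ | L
    · simp only [birkhoffSum_zero, CharP.cast_eq_zero, mul_zero, zero_add]
      positivity
    · rw [birkhoffSum_succ', hx, zero_add]
      have := ih L (by omega) (f x)
      push_cast
      linarith
  · obtain ⟨m, hm0, hmN, hm⟩ := hstop x hx
    rcases le_or_gt m L with hmL | hLm
    · obtain ⟨k, rfl⟩ := Nat.exists_eq_add_of_le hmL
      rw [birkhoffSum_add]
      have := ih k (by omega) (f^[m] x)
      push_cast
      linarith
    · have hsum : birkhoffSum f u L x ≤ L * K := by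
        simpa [birkhoffSum] using Finset.sum_le_sum fun k (_ : k ∈ Finset.range L) => huK (f^[k] x)
      have hLN : (L : ℝ) * K ≤ N * K := by gcongr; exact_mod_cast (hLm.trans_le hmN).le
      have : 0 ≤ c * L := by positivity
      linarith

variable [MeasurableSpace α] {μ : Measure α}

theorem integrable_birkhoffSum (hf : MeasurePreserving f μ μ) (hu : Integrable u μ) (n : ℕ) :
    Integrable (birkhoffSum f u n) μ :=
  integrable_finsetSum _ fun k _ => (hf.iterate k).integrable_comp_of_integrable hu

theorem integral_birkhoffSum (hf : MeasurePreserving f μ μ) (hu : Integrable u μ) (n : ℕ) :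
    ∫ x, birkhoffSum f u n x ∂μ = n * ∫ x, u x ∂μ := by
  have hcomp : ∀ k, ∫ x, u (f^[k] x) ∂μ = ∫ x, u x ∂μ := fun k => by
    conv_rhs => rw [← (hf.iterate k).map_eq]
    refine (integral_map (hf.iterate k).measurable.aemeasurable ?_).symm
    rw [(hf.iterate k).map_eq]
    exact hu.aestronglyMeasurable
  simp only [birkhoffSum]
  rw [integral_finsetSum (Finset.range n) (f := fun k x => u (f^[k] x))
    fun k _ => (hf.iterate k).integrable_comp_of_integrable hu]
  simp [hcomp]

variable [IsFiniteMeasure μ]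

theorem integral_le_of_exists_birkhoffSum_le (hf : MeasurePreserving f μ μ) (hu : Integrable u μ)
    (hu0 : ∀ x, 0 ≤ u x) (huK : ∀ x, u x ≤ K) (hc : 0 ≤ c)
    (hstop : ∀ x, u x ≠ 0 → ∃ m, 0 < m ∧ m ≤ N ∧ birkhoffSum f u m x ≤ c * m) :
    ∫ x, u x ∂μ ≤ c * μ.real Set.univ := by
  have hlim : Tendsto (fun L : ℕ => (c + N * K / L) * μ.real Set.univ) atTop
      (𝓝 (c * μ.real Set.univ)) := by
    simpa using ((tendsto_const_div_atTop_nhds_zero_nat (N * K)).const_add c).mul_const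
      (μ.real Set.univ)
  refine ge_of_tendsto hlim ?_
  filter_upwards [eventually_gt_atTop 0] with L hL
  have hL' : (0 : ℝ) < L := by exact_mod_cast hL
  have hbound := integral_mono (integrable_birkhoffSum hf hu L) (integrable_const _)
    (birkhoffSum_le_mul_add_of_exists_le hu0 huK hc hstop L)
  rw [integral_birkhoffSum hf hu, integral_const, smul_eq_mul] at hbound
  calc ∫ x, u x ∂μ = (L * ∫ x, u x ∂μ) / L := by field_simp
    _ ≤ μ.real Set.univ * (c * L + N * K) / L := by gcongr
    _ = (c + N * K / L) * μ.real Set.univ := by field_simp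

theorem measurableSet_exists_birkhoffSum_lt (hf : Measurable f) (hu : Measurable u) (ε : ℝ)
    (N : ℕ) : MeasurableSet {x | ∃ m ≤ N, birkhoffSum f u m x < ε * m} :=
  measurableSet_setOfPred.2 <| Measurable.exists fun _ => measurable_const.and <|
    measurableSet_setOfPred.1 <| measurableSet_lt
      (Finset.measurable_sum _ fun k _ => hu.comp (hf.iterate k)) measurable_const

theorem integral_le_add_measureReal_compl (hf : MeasurePreserving f μ μ) (hu : Measurable u)
    (hu0 : ∀ x, 0 ≤ u x) (huK : ∀ x, u x ≤ K) {ε : ℝ} (hε : 0 ≤ ε) (N : ℕ) :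
    ∫ x, u x ∂μ ≤
      ε * μ.real Set.univ + K * μ.real {x | ∃ m ≤ N, birkhoffSum f u m x < ε * m}ᶜ := by
  set G := {x | ∃ m ≤ N, birkhoffSum f u m x < ε * m}
  have hG : MeasurableSet G := measurableSet_exists_birkhoffSum_lt hf.measurable hu ε N
  have hint : Integrable u μ := .of_bound hu.aestronglyMeasurable K
    (Eventually.of_forall fun x => by rw [Real.norm_of_nonneg (hu0 x)]; exact huK x)
  have hle_u : G.indicator u ≤ u := Set.indicator_le_self' fun x _ => hu0 x
  have hstop : ∀ x, G.indicator u x ≠ 0 →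
      ∃ m, 0 < m ∧ m ≤ N ∧ birkhoffSum f (G.indicator u) m x ≤ ε * m := by
    intro x hx
    obtain ⟨m, hmN, hm⟩ : x ∈ G := by
      by_contra hxG
      exact hx (Set.indicator_of_notMem hxG u)
    refine ⟨m, Nat.pos_of_ne_zero ?_, hmN, ?_⟩
    · rintro rfl
      simp at hm
    · exact (show birkhoffSum f (G.indicator u) m x ≤ birkhoffSum f u m x from
        Finset.sum_le_sum fun k _ => hle_u _).trans hm.le
  have hGu : ∫ x, G.indicator u x ∂μ ≤ ε * μ.real Set.univ :=
    integral_le_of_exists_birkhoffSum_le hf (hint.indicator hG)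
      (Set.indicator_nonneg fun x _ => hu0 x) (fun x => (hle_u x).trans (huK x)) hε hstop
  have hsplit : ∀ x, u x ≤ G.indicator u x + Gᶜ.indicator (fun _ => K) x := by
    intro x
    by_cases hx : x ∈ G <;> simp [hx, huK]
  calc ∫ x, u x ∂μ ≤ ∫ x, G.indicator u x + Gᶜ.indicator (fun _ => K) x ∂μ :=
        integral_mono hint ((hint.indicator hG).add ((integrable_const K).indicator hG.compl))
          hsplit
    _ = ∫ x, G.indicator u x ∂μ + K * μ.real Gᶜ := by
        rw [integral_add (hint.indicator hG) ((integrable_const K).indicator hG.compl),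
          integral_indicator_const K hG.compl, smul_eq_mul, mul_comm]
    _ ≤ _ := by gcongr

theorem ae_eq_zero_of_forall_exists_birkhoffSum_lt (hf : MeasurePreserving f μ μ)
    (hu : Measurable u) (hu0 : ∀ x, 0 ≤ u x) (huK : ∀ x, u x ≤ K)
    (h : ∀ x, ∀ ε > 0, ∃ n : ℕ, birkhoffSum f u n x < ε * n) : u =ᵐ[μ] 0 := by
  have hint : Integrable u μ := .of_bound hu.aestronglyMeasurable K
    (Eventually.of_forall fun x => by rw [Real.norm_of_nonneg (hu0 x)]; exact huK x)
  refine (integral_eq_zero_iff_of_nonneg hu0 hint).1 (le_antisymm ?_ (integral_nonneg hu0))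
  have hbound : ∀ ε > 0, ∫ x, u x ∂μ ≤ ε * μ.real Set.univ := by
    intro ε hε
    set G : ℕ → Set α := fun N => {x | ∃ m ≤ N, birkhoffSum f u m x < ε * m}
    have hG_anti : Antitone fun N => (G N)ᶜ := fun N N' hN =>
      Set.compl_subset_compl.2 fun x ⟨m, hm, hlt⟩ => ⟨m, hm.trans hN, hlt⟩
    have hG_empty : ⋂ N, (G N)ᶜ = ∅ := by
      simp only [← Set.compl_iUnion, Set.compl_empty_iff, Set.eq_univ_iff_forall, Set.mem_iUnion]
      exact fun x => (h x ε hε).imp fun n hn => ⟨n, le_rfl, hn⟩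
    have hlim : Tendsto (fun N => μ.real (G N)ᶜ) atTop (𝓝 0) := by
      have := tendsto_measure_iInter_atTop (fun N =>
        (measurableSet_exists_birkhoffSum_lt hf.measurable hu ε N).compl.nullMeasurableSet)
        hG_anti ⟨0, measure_ne_top μ _⟩
      rw [hG_empty, measure_empty] at this
      simpa [measureReal_def, Function.comp_def, G] using
        (ENNReal.tendsto_toReal ENNReal.zero_ne_top).comp this
    simpa using ge_of_tendsto' (tendsto_const_nhds.add (hlim.const_mul K))
      (integral_le_add_measureReal_compl hf hu hu0 huK hε.le)
  have hlim : Tendsto (fun ε => ε * μ.real Set.univ) (𝓝[>] 0) (𝓝 0) := by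
    have : Tendsto (fun ε : ℝ => ε * μ.real Set.univ) (𝓝 0) (𝓝 (0 * μ.real Set.univ)) :=
      tendsto_id.mul_const _
    simpa using this.mono_left nhdsWithin_le_nhds
  exact ge_of_tendsto hlim (eventually_nhdsWithin_of_forall hbound)

end StoppingTime

namespace Setting

variable {Θ : Type*} [MeasurableSpace Θ] (S : Setting Θ)

lemma h_continuousOn : ContinuousOn S.h (Set.Ici 0) := fun x hx =>
  (S.h_hasDeriv x hx).continuousWithinAt

lemma h_strictMonoOn : StrictMonoOn S.h (Set.Ici 0) := by
  refine strictMonoOn_of_deriv_pos (convex_Ici 0) S.h_continuousOn fun x hx => ?_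
  rw [interior_Ici] at hx
  rw [((S.h_hasDeriv x (Set.mem_Ici.2 (le_of_lt hx))).hasDerivAt (Ici_mem_nhds hx)).deriv]
  exact S.h'_pos x hx

lemma h_pos {x : ℝ} (hx : 0 < x) : 0 < S.h x := by
  simpa [S.h_zero] using S.h_strictMonoOn Set.self_mem_Ici hx.le hx

lemma h_mono {x y : ℝ} (hx : 0 ≤ x) (hxy : x ≤ y) : S.h x ≤ S.h y :=
  S.h_strictMonoOn.monotoneOn hx (hx.trans hxy) hxy

lemma h_div_strictAntiOn : StrictAntiOn (fun x => S.h x / x) (Set.Ioi 0) := by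
  intro x hx y hy hxy
  simpa [S.h_zero] using S.h_strictConcave.secant_strict_mono Set.self_mem_Ici
    (Set.mem_Ici.2 (le_of_lt hx)) (Set.mem_Ici.2 (le_of_lt hy)) hx.ne' hy.ne' hxy

lemma tendsto_h_div : Tendsto (fun x => S.h x / x) (𝓝[>] 0) (𝓝 1) := by
  have h0 := S.h_hasDeriv 0 Set.self_mem_Ici
  rw [hasDerivWithinAt_iff_tendsto_slope, Set.Ici_sdiff_left, S.h'_zero] at h0
  refine h0.congr' ?_
  filter_upwards [self_mem_nhdsWithin] with x hx
  simp [slope_def_field, S.h_zero]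

lemma h_div_lt_one {x : ℝ} (hx : 0 < x) : S.h x / x < 1 := by
  have hx2 : 0 < x / 2 := half_pos hx
  have hle : S.h (x / 2) / (x / 2) ≤ 1 := by
    refine ge_of_tendsto S.tendsto_h_div ?_
    filter_upwards [Ioo_mem_nhdsGT hx2] with y hy
    exact (S.h_div_strictAntiOn hy.1 hx2 hy.2).le
  exact (S.h_div_strictAntiOn hx2 hx (half_lt_self hx)).trans_le hle

lemma h_mul_le {c x : ℝ} (hc : 1 ≤ c) (hx : 0 ≤ x) : S.h (c * x) ≤ c * S.h x := by
  rcases hx.eq_or_lt with rfl | hx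
  · simp [S.h_zero]
  have hcx : x ≤ c * x := le_mul_of_one_le_left hx.le hc
  have := S.h_div_strictAntiOn.antitoneOn hx (hx.trans_le hcx) hcx
  rw [div_le_div_iff₀ (by positivity) hx] at this
  nlinarith

lemma Hfn_neg {x : ℝ} (hx : 0 < x) : S.Hfn x < 0 :=
  Real.log_neg (div_pos (S.h_pos hx) hx) (S.h_div_lt_one hx)

lemma Hfn_le_Hfn {x y : ℝ} (hx : 0 < x) (hxy : x ≤ y) : S.Hfn y ≤ S.Hfn x := by
  have hy : 0 < y := hx.trans_le hxy
  exact Real.log_le_log (div_pos (S.h_pos hy) hy) (S.h_div_strictAntiOn.antitoneOn hx hy hxy)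

lemma measurable_h_comp {u : Θ → ℝ} (hu : Measurable u) (hu0 : ∀ θ, 0 ≤ u θ) :
    Measurable fun θ => S.h (u θ) :=
  S.h_continuousOn.domRestrict.measurable.comp (hu.subtype_mk (h := hu0))

variable {t : ℝ} {θ : Θ} {x y : ℝ}

lemma f_nonneg (hx : 0 ≤ x) : 0 ≤ S.f t θ x := by
  have := S.g_pos θ
  have := S.h_nonneg hx
  unfold f; positivity

lemma f_pos (hx : 0 < x) : 0 < S.f t θ x := by
  have := S.g_pos θ
  have := S.h_pos hx
  unfold f; positivity

lemma f_eq_zero_iff (hx : 0 ≤ x) : S.f t θ x = 0 ↔ x = 0 := by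
  refine ⟨fun h0 => ?_, fun h0 => by simp [f, h0, S.h_zero]⟩
  by_contra hne
  exact (S.f_pos (lt_of_le_of_ne hx (Ne.symm hne))).ne' h0

lemma f_mono (hx : 0 ≤ x) (hxy : x ≤ y) : S.f t θ x ≤ S.f t θ y := by
  have := S.g_pos θ
  unfold f; gcongr; exact S.h_mono hx hxy

lemma continuousOn_f : ContinuousOn (S.f t θ) (Set.Ici 0) :=
  continuousOn_const.mul S.h_continuousOn

lemma f_le_mul_f {s c : ℝ} (hts : t ≤ s) (hc : 1 ≤ c) (hx : 0 ≤ x) (hy : 0 ≤ y)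
    (hyx : y ≤ c * x) : S.f s θ y ≤ c * S.f t θ x := by
  have := S.g_pos θ
  have := S.h_nonneg hy
  calc S.f s θ y ≤ Real.exp (-t) * S.g θ * S.h (c * x) := by
        unfold f; gcongr; exact S.h_mono hy hyx
    _ ≤ Real.exp (-t) * S.g θ * (c * S.h x) := by gcongr; exact S.h_mul_le hc hx
    _ = c * S.f t θ x := by unfold f; ring

lemma f_le_exp_mul {C : ℝ} (hC : S.g θ ≤ C) (hx : 0 ≤ x) : S.f t θ x ≤ Real.exp (-t) * C * x := by
  have := S.g_pos θ
  have := S.h_nonneg hx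
  have := S.h_le_self hx
  have : 0 ≤ C := (S.g_pos θ).le.trans hC
  unfold f; gcongr


section Psi

variable {t M : ℝ}

lemma psi_zero (θ : Θ) : S.ψ t M 0 θ = M := rfl

lemma psi_succ (n : ℕ) (θ : Θ) :
    S.ψ t M (n + 1) θ = S.f t (S.Tinv θ) (S.ψ t M n (S.Tinv θ)) := by
  show S.f t (S.T^[n] (S.Tinv^[n + 1] θ)) (S.fn t n (S.Tinv^[n + 1] θ) M) = _
  rw [Function.iterate_succ_apply, S.right_inv.iterate n]
  rfl

lemma psi_nonneg (hM : 0 ≤ M) (n : ℕ) (θ : Θ) : 0 ≤ S.ψ t M n θ := by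
  induction n generalizing θ with
  | zero => exact hM
  | succ n ih => rw [psi_succ]; exact S.f_nonneg (ih _)

lemma psi_pos (hM : 0 < M) (n : ℕ) (θ : Θ) : 0 < S.ψ t M n θ := by
  induction n generalizing θ with
  | zero => exact hM
  | succ n ih => rw [psi_succ]; exact S.f_pos (ih _)

lemma psi_succ_le (hM : 0 ≤ M) (hfM : ∀ θ, S.f t θ M < M) (n : ℕ) (θ : Θ) :
    S.ψ t M (n + 1) θ ≤ S.ψ t M n θ := by
  induction n generalizing θ with
  | zero => exact (hfM _).le
  | succ n ih =>
    rw [psi_succ S (n + 1) θ, psi_succ S n θ]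
    exact S.f_mono (S.psi_nonneg hM _ _) (ih _)

lemma measurable_psi (hM : 0 ≤ M) (n : ℕ) : Measurable (S.ψ t M n) := by
  induction n with
  | zero => exact measurable_const
  | succ n ih =>
    simp_rw [funext (S.psi_succ (t := t) (M := M) n), f]
    exact (measurable_const.mul (S.g_meas.comp S.Tinv_meas)).mul
      (S.measurable_h_comp (ih.comp S.Tinv_meas) fun θ => S.psi_nonneg hM n _)

lemma bddBelow_range_psi (hM : 0 ≤ M) (θ : Θ) :
    BddBelow (Set.range fun n => S.ψ t M (n + 1) θ) :=
  ⟨0, by rintro _ ⟨n, rfl⟩; exact S.psi_nonneg hM _ θ⟩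

lemma phi_nonneg (hM : 0 ≤ M) (θ : Θ) : 0 ≤ S.φ t M θ :=
  le_ciInf fun n => S.psi_nonneg hM (n + 1) θ

lemma phi_le_psi (hM : 0 ≤ M) (n : ℕ) (θ : Θ) : S.φ t M θ ≤ S.ψ t M (n + 1) θ :=
  ciInf_le (S.bddBelow_range_psi hM θ) n

lemma phi_lt (hM : 0 ≤ M) (hfM : ∀ θ, S.f t θ M < M) (θ : Θ) : S.φ t M θ < M :=
  (S.phi_le_psi hM 0 θ).trans_lt (hfM _)

lemma measurable_phi (hM : 0 ≤ M) : Measurable (S.φ t M) :=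
  Measurable.iInf fun n => S.measurable_psi hM (n + 1)

lemma tendsto_psi (hM : 0 ≤ M) (hfM : ∀ θ, S.f t θ M < M) (θ : Θ) :
    Tendsto (fun n => S.ψ t M (n + 1) θ) atTop (𝓝 (S.φ t M θ)) :=
  tendsto_atTop_ciInf (antitone_nat_of_succ_le fun n => S.psi_succ_le hM hfM (n + 1) θ)
    (S.bddBelow_range_psi hM θ)

lemma phi_eq_f_phi_Tinv (hM : 0 ≤ M) (hfM : ∀ θ, S.f t θ M < M) (θ : Θ) :
    S.φ t M θ = S.f t (S.Tinv θ) (S.φ t M (S.Tinv θ)) := by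
  have hlim : Tendsto (fun n => S.ψ t M (n + 1) (S.Tinv θ)) atTop
      (𝓝[Set.Ici 0] (S.φ t M (S.Tinv θ))) :=
    tendsto_nhdsWithin_iff.2 ⟨S.tendsto_psi hM hfM _,
      Eventually.of_forall fun n => S.psi_nonneg hM _ _⟩
  refine tendsto_nhds_unique ((S.tendsto_psi hM hfM θ).comp (tendsto_add_atTop_nat 1)) ?_
  refine ((S.continuousOn_f _ (S.phi_nonneg hM _)).tendsto.comp hlim).congr fun n => ?_
  exact (S.psi_succ (n + 1) θ).symm

lemma phi_Tinv_eq_zero_iff (hM : 0 ≤ M) (hfM : ∀ θ, S.f t θ M < M) (θ : Θ) :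
    S.φ t M (S.Tinv θ) = 0 ↔ S.φ t M θ = 0 := by
  rw [S.phi_eq_f_phi_Tinv hM hfM θ, S.f_eq_zero_iff (S.phi_nonneg hM _)]

lemma log_phi_eq (hM : 0 ≤ M) (hfM : ∀ θ, S.f t θ M < M) {θ : Θ}
    (hθ : 0 < S.φ t M (S.Tinv θ)) :
    Real.log (S.φ t M θ) = Real.log (S.φ t M (S.Tinv θ)) + (Real.log (S.g (S.Tinv θ)) - t)
      + S.Hfn (S.φ t M (S.Tinv θ)) := by
  have hh := S.h_pos hθ
  have hg := S.g_pos (S.Tinv θ)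
  rw [S.phi_eq_f_phi_Tinv hM hfM θ, f, Hfn, Real.log_mul (by positivity) hh.ne',
    Real.log_mul (Real.exp_pos _).ne' hg.ne', Real.log_exp, Real.log_div hh.ne' hθ.ne']
  ring

lemma psi_le_mul_psi {s M' c : ℝ} (hts : t ≤ s) (hc : 1 ≤ c) (hM : 0 ≤ M) (hM' : 0 ≤ M')
    (hMc : M' ≤ c * M) (n : ℕ) (θ : Θ) : S.ψ s M' n θ ≤ c * S.ψ t M n θ := by
  induction n generalizing θ with
  | zero => exact hMc
  | succ n ih =>
    rw [psi_succ, psi_succ]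
    exact S.f_le_mul_f hts hc (S.psi_nonneg hM _ _) (S.psi_nonneg hM' _ _) (ih _)

lemma phi_le_mul_phi {s M' c : ℝ} (hts : t ≤ s) (hc : 1 ≤ c) (hM : 0 ≤ M) (hM' : 0 ≤ M')
    (hMc : M' ≤ c * M) (θ : Θ) : S.φ s M' θ ≤ c * S.φ t M θ := by
  show _ ≤ c * ⨅ n, S.ψ t M (n + 1) θ
  rw [Real.mul_iInf_of_nonneg (by linarith)]
  exact le_ciInf fun n =>
    (S.phi_le_psi hM' n θ).trans (S.psi_le_mul_psi hts hc hM hM' hMc (n + 1) θ)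

lemma phi_eq_zero_of_le {s M' : ℝ} (hts : t ≤ s) (hM : 0 < M) (hM' : 0 ≤ M') {θ : Θ}
    (h0 : S.φ t M θ = 0) : S.φ s M' θ = 0 := by
  have hMc : M' ≤ max 1 (M' / M) * M :=
    (div_le_iff₀ hM).1 (le_max_right _ _)
  refine le_antisymm ?_ (S.phi_nonneg hM' θ)
  simpa [h0] using S.phi_le_mul_phi hts (le_max_left _ _) hM.le hM' hMc θ

lemma psi_le_geom {C : ℝ} (hC : ∀ η, S.g η ≤ C) (hM : 0 ≤ M) (n : ℕ) (θ : Θ) :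
    S.ψ t M n θ ≤ M * (Real.exp (-t) * C) ^ n := by
  have hC0 : 0 ≤ C := (S.g_pos θ).le.trans (hC θ)
  induction n generalizing θ with
  | zero => simp [psi_zero]
  | succ n ih =>
    rw [psi_succ, pow_succ]
    calc _ ≤ Real.exp (-t) * C * S.ψ t M n (S.Tinv θ) :=
          S.f_le_exp_mul (hC _) (S.psi_nonneg hM _ _)
      _ ≤ Real.exp (-t) * C * (M * (Real.exp (-t) * C) ^ n) := by gcongr; exact ih _
      _ = _ := by ring

lemma phi_eq_zero_of_exp_neg_mul_lt_one {C : ℝ} (hC : ∀ η, S.g η ≤ C) (hM : 0 ≤ M)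
    (hr : Real.exp (-t) * C < 1) (θ : Θ) : S.φ t M θ = 0 := by
  have hr0 : 0 ≤ Real.exp (-t) * C := by
    have := (S.g_pos θ).le.trans (hC θ)
    positivity
  have hlim : Tendsto (fun n => M * (Real.exp (-t) * C) ^ (n + 1)) atTop (𝓝 0) := by
    simpa using ((tendsto_pow_atTop_nhds_zero_of_lt_one hr0 hr).comp
      (tendsto_add_atTop_nat 1)).const_mul M
  refine le_antisymm ?_ (S.phi_nonneg hM θ)
  exact ge_of_tendsto' hlim fun n => (S.phi_le_psi hM n θ).trans (S.psi_le_geom hC hM _ θ)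

end Psi


section Positivity

variable {s a M : ℝ}

lemma exists_exp_neg_mul_min_le_h (ha : 0 < a) :
    ∃ δ > 0, ∀ x, 0 < x → Real.exp (-a) * min x δ ≤ S.h x := by
  have hev : ∀ᶠ x in 𝓝[>] (0 : ℝ), Real.exp (-a) < S.h x / x :=
    S.tendsto_h_div.eventually (eventually_gt_nhds (Real.exp_lt_one_iff.2 (neg_lt_zero.2 ha)))
  obtain ⟨δ, hδ, hsub⟩ := mem_nhdsGT_iff_exists_Ioc_subset.1 hev
  have hlin : ∀ x, 0 < x → x ≤ δ → Real.exp (-a) * x ≤ S.h x := fun x hx hxδ =>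
    ((lt_div_iff₀ hx).1 (hsub ⟨hx, hxδ⟩)).le
  refine ⟨δ, hδ, fun x hx => ?_⟩
  rcases le_total x δ with hxδ | hδx
  · rw [min_eq_left hxδ]
    exact hlin x hx hxδ
  · rw [min_eq_right hδx]
    exact (hlin δ hδ le_rfl).trans (S.h_mono (le_of_lt hδ) hδx)

lemma mul_exp_le_psi {δ : ℝ} (hδ : 0 < δ) (hδM : δ ≤ M)
    (hh : ∀ x, 0 < x → Real.exp (-a) * min x δ ≤ S.h x) (n : ℕ) (θ : Θ) (L : ℝ)
    (hL : ∀ i ≤ n,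
      L + i * (s + a) ≤ birkhoffSum S.Tinv (fun η => Real.log (S.g (S.Tinv η))) i θ) :
    δ * Real.exp L ≤ S.ψ s M n θ := by
  induction n generalizing θ L with
  | zero =>
    have hL0 : L ≤ 0 := by simpa using hL 0 le_rfl
    calc δ * Real.exp L ≤ δ * 1 := by gcongr; exact Real.exp_le_one_iff.2 hL0
      _ ≤ S.ψ s M 0 θ := by rw [mul_one]; exact hδM
  | succ n ih =>
    set c := Real.log (S.g (S.Tinv θ)) - (s + a)
    set x := S.ψ s M n (S.Tinv θ)
    have hLc : L ≤ c := by
      have := hL 1 le_add_self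
      rw [birkhoffSum_one] at this
      push_cast at this
      linarith
    have hx : δ * Real.exp (L - c) ≤ x := ih (S.Tinv θ) (L - c) fun i hi => by
      have := hL (i + 1) (by omega)
      rw [birkhoffSum_succ'] at this
      push_cast at this
      linarith
    have hmin : δ * Real.exp (L - c) ≤ min x δ :=
      le_min hx (mul_le_of_le_one_right hδ.le (Real.exp_le_one_iff.2 (by linarith)))
    calc δ * Real.exp L = Real.exp c * (δ * Real.exp (L - c)) := by
          rw [mul_left_comm, ← Real.exp_add, add_sub_cancel]
      _ ≤ Real.exp c * min x δ := by gcongr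
      _ = Real.exp (-s) * S.g (S.Tinv θ) * (Real.exp (-a) * min x δ) := by
          rw [show c = -s + Real.log (S.g (S.Tinv θ)) + -a by ring, Real.exp_add, Real.exp_add,
            Real.exp_log (S.g_pos _)]
          ring
      _ ≤ S.f s (S.Tinv θ) x := by
          have := S.g_pos (S.Tinv θ)
          unfold f
          gcongr
          exact hh x (S.psi_pos (hδ.trans_le hδM) n _)
      _ = S.ψ s M (n + 1) θ := (S.psi_succ n θ).symm

lemma phi_pos_of_le_birkhoffSum (ha : 0 < a) (hM : 0 < M) {θ : Θ} {L : ℝ}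
    (hL : ∀ n : ℕ,
      L + n * (s + a) ≤ birkhoffSum S.Tinv (fun η => Real.log (S.g (S.Tinv η))) n θ) :
    0 < S.φ s M θ := by
  obtain ⟨δ, hδ, hh⟩ := S.exists_exp_neg_mul_min_le_h ha
  have hh' : ∀ x, 0 < x → Real.exp (-a) * min x (min δ M) ≤ S.h x := fun x hx =>
    le_trans (by gcongr; exact min_le_left _ _) (hh x hx)
  have hpos : 0 < min δ M * Real.exp L := by positivity
  exact hpos.trans_le <| le_ciInf fun n =>
    S.mul_exp_le_psi (lt_min hδ hM) (min_le_right _ _) hh' (n + 1) θ L fun i _ => hL i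

end Positivity


section Critical

variable {M : ℝ → ℝ} {t : ℝ}

lemma exists_phi_eq_zero (hM : ∀ u, 0 ≤ M u) (θ : Θ) : ∃ u, S.φ u (M u) θ = 0 := by
  obtain ⟨C, hC⟩ := S.g_bdd
  have hC0 : 0 < C := (S.g_pos θ).trans_le (hC θ)
  refine ⟨Real.log C + 1, S.phi_eq_zero_of_exp_neg_mul_lt_one hC (hM _) ?_ θ⟩
  rw [neg_add, Real.exp_add, Real.exp_neg, Real.exp_log hC0, mul_right_comm,
    inv_mul_cancel₀ hC0.ne', one_mul]
  exact Real.exp_lt_one_iff.2 (by norm_num)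

lemma phi_eq_zero_of_tc_lt (hM : ∀ u, 0 < M u) {θ : Θ} {s : ℝ} (hs : S.tc M θ < s) :
    S.φ s (M s) θ = 0 := by
  obtain ⟨u, hu, hus⟩ :=
    exists_lt_of_csInf_lt (S.exists_phi_eq_zero (fun u => (hM u).le) θ) hs
  exact S.phi_eq_zero_of_le hus.le (hM u) (hM s).le hu

def critSet (M : ℝ → ℝ) (t : ℝ) : Set Θ :=
  {θ | S.φ t (M t) θ ≠ 0 ∧ ∀ s, t < s → S.φ s (M s) θ = 0}

lemma sdiff_subset_critSet (hM : ∀ u, 0 < M u) :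
    S.Sset M t \ S.Nset t (M t) ⊆ S.critSet M t := fun θ ⟨htc, hφ⟩ =>
  ⟨hφ, fun _ hs => S.phi_eq_zero_of_tc_lt hM ((show S.tc M θ = t from htc) ▸ hs)⟩

lemma measurableSet_critSet (hM : ∀ u, 0 < M u) : MeasurableSet (S.critSet M t) := by
  have hzero : ∀ u, MeasurableSet {θ | S.φ u (M u) θ = 0} := fun u =>
    measurableSet_eq_fun (S.measurable_phi (hM u).le) measurable_const
  have hcrit : S.critSet M t =
      {θ | S.φ t (M t) θ = 0}ᶜ ∩
        ⋂ n : ℕ, {θ | S.φ (t + 1 / (n + 1)) (M (t + 1 / (n + 1))) θ = 0} := by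
    ext θ
    refine ⟨fun ⟨h0, hs⟩ => ⟨h0, Set.mem_iInter.2 fun n => hs _ (by simp; positivity)⟩,
      fun ⟨h0, hn⟩ => ⟨h0, fun s hs => ?_⟩⟩
    obtain ⟨n, hn'⟩ := exists_nat_one_div_lt (sub_pos.2 hs)
    exact S.phi_eq_zero_of_le (by linarith) (hM _) (hM s).le (Set.mem_iInter.1 hn n)
  rw [hcrit]
  exact (hzero t).compl.inter (MeasurableSet.iInter fun n => hzero _)

lemma mapsTo_Tinv_critSet (hM : ∀ u, 0 < M u) (hMf : ∀ u θ, S.f u θ (M u) < M u) :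
    Set.MapsTo S.Tinv (S.critSet M t) (S.critSet M t) := fun θ ⟨h0, hs⟩ =>
  ⟨(S.phi_Tinv_eq_zero_iff (hM t).le (hMf t) θ).not.2 h0,
    fun s hts => (S.phi_Tinv_eq_zero_iff (hM s).le (hMf s) θ).2 (hs s hts)⟩

lemma phi_pos_of_mem_critSet (hM : ∀ u, 0 < M u) {θ : Θ} (hθ : θ ∈ S.critSet M t) :
    0 < S.φ t (M t) θ :=
  (S.phi_nonneg (hM t).le θ).lt_of_ne' hθ.1

noncomputable def defect (M : ℝ → ℝ) (t : ℝ) : Θ → ℝ :=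
  (S.critSet M t).indicator fun θ => -S.Hfn (S.φ t (M t) (S.Tinv θ))

lemma measurable_defect (hM : ∀ u, 0 < M u) : Measurable (S.defect M t) := by
  have hφ : Measurable fun θ => S.φ t (M t) (S.Tinv θ) :=
    (S.measurable_phi (hM t).le).comp S.Tinv_meas
  exact (Real.measurable_log.comp ((S.measurable_h_comp hφ fun θ =>
    S.phi_nonneg (hM t).le _).div hφ)).neg.indicator (S.measurableSet_critSet hM)

lemma defect_pos (hM : ∀ u, 0 < M u) (hMf : ∀ u θ, S.f u θ (M u) < M u) {θ : Θ}
    (hθ : θ ∈ S.critSet M t) : 0 < S.defect M t θ := by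
  rw [defect, Set.indicator_of_mem hθ]
  exact neg_pos.2 (S.Hfn_neg (S.phi_pos_of_mem_critSet hM (S.mapsTo_Tinv_critSet hM hMf hθ)))

lemma defect_nonneg (hM : ∀ u, 0 < M u) (hMf : ∀ u θ, S.f u θ (M u) < M u) (θ : Θ) :
    0 ≤ S.defect M t θ := by
  by_cases hθ : θ ∈ S.critSet M t
  · exact (S.defect_pos hM hMf hθ).le
  · rw [defect, Set.indicator_of_notMem hθ]

lemma defect_le (hM : ∀ u, 0 < M u) (hMf : ∀ u θ, S.f u θ (M u) < M u) (θ : Θ) :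
    S.defect M t θ ≤ -S.Hfn (M t) := by
  refine Set.indicator_le' (fun θ hθ => ?_) (fun _ _ => (neg_pos.2 (S.Hfn_neg (hM t))).le) θ
  have hpos := S.phi_pos_of_mem_critSet hM (S.mapsTo_Tinv_critSet hM hMf hθ)
  exact neg_le_neg (S.Hfn_le_Hfn hpos (S.phi_lt (hM t).le (hMf t) _).le)

lemma birkhoffSum_log_g_eq (hM : ∀ u, 0 < M u) (hMf : ∀ u θ, S.f u θ (M u) < M u) {θ : Θ}
    (hθ : θ ∈ S.critSet M t) (m : ℕ) :
    birkhoffSum S.Tinv (fun η => Real.log (S.g (S.Tinv η))) m θ =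
      m * t + Real.log (S.φ t (M t) θ) - Real.log (S.φ t (M t) (S.Tinv^[m] θ))
        + birkhoffSum S.Tinv (S.defect M t) m θ := by
  induction m generalizing θ with
  | zero => simp
  | succ m ih =>
    have hθ' := S.mapsTo_Tinv_critSet hM hMf hθ
    rw [birkhoffSum_succ', birkhoffSum_succ', ih hθ', Function.iterate_succ_apply,
      S.log_phi_eq (hM t).le (hMf t) (S.phi_pos_of_mem_critSet hM hθ'),
      show S.defect M t θ = _ from Set.indicator_of_mem hθ _]
    push_cast
    ring

lemma exists_birkhoffSum_defect_lt (hM : ∀ u, 0 < M u) (hMf : ∀ u θ, S.f u θ (M u) < M u)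
    (θ : Θ) {ε : ℝ} (hε : 0 < ε) : ∃ m : ℕ, birkhoffSum S.Tinv (S.defect M t) m θ < ε * m := by
  by_cases hθ : θ ∈ S.critSet M t
  swap
  · exact ⟨1, by simpa [birkhoffSum_one, defect, Set.indicator_of_notMem hθ] using hε⟩
  by_contra! hgrowth
  have hpos : 0 < S.φ (t + ε / 2) (M (t + ε / 2)) θ := by
    refine S.phi_pos_of_le_birkhoffSum (a := ε / 2) (half_pos hε) (hM _)
      (L := Real.log (S.φ t (M t) θ) - Real.log (M t)) fun n => ?_
    have hθn := (S.mapsTo_Tinv_critSet hM hMf).iterate n hθ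
    have hlog : Real.log (S.φ t (M t) (S.Tinv^[n] θ)) ≤ Real.log (M t) :=
      Real.log_le_log (S.phi_pos_of_mem_critSet hM hθn) (S.phi_lt (hM t).le (hMf t) _).le
    rw [S.birkhoffSum_log_g_eq hM hMf hθ n]
    linarith [hgrowth n]
  exact hpos.ne' (hθ.2 _ (by linarith))

theorem measure_critSet_eq_zero (hM : ∀ u, 0 < M u) (hMf : ∀ u θ, S.f u θ (M u) < M u)
    {μ : Measure Θ} [IsFiniteMeasure μ] (hμ : MeasurePreserving S.Tinv μ μ) :
    μ (S.critSet M t) = 0 := by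
  have hW : S.defect M t =ᵐ[μ] 0 :=
    ae_eq_zero_of_forall_exists_birkhoffSum_lt hμ (S.measurable_defect hM)
      (S.defect_nonneg hM hMf) (S.defect_le hM hMf) fun θ _ hε =>
        S.exists_birkhoffSum_defect_lt hM hMf θ hε
  exact measure_mono_null (fun θ hθ => (S.defect_pos hM hMf hθ).ne') (ae_iff.1 hW)

end Critical

def toMeasurableEquiv : Θ ≃ᵐ Θ where
  toFun := S.T
  invFun := S.Tinv
  left_inv := S.left_inv
  right_inv := S.right_inv
  measurable_toFun := S.T_meas
  measurable_invFun := S.Tinv_meas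

lemma measurePreserving_Tinv {μ : Measure Θ} (hμ : MeasurePreserving S.T μ μ) :
    MeasurePreserving S.Tinv μ μ :=
  MeasurePreserving.symm S.toMeasurableEquiv hμ

end Setting

theorem stmt9_general {Θ : Type*} [MeasurableSpace Θ] (S : Setting Θ)
    (M : ℝ → ℝ) (hM : ∀ t, 0 < M t) (hMf : ∀ t θ, S.f t θ (M t) < M t)
    (t : ℝ) (μ : Measure Θ) [IsProbabilityMeasure μ]
    (hμ : MeasurePreserving S.T μ μ) :
    μ (S.Sset M t \ S.Nset t (M t)) = 0 :=
  measure_mono_null (S.sdiff_subset_critSet hM)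
    (S.measure_critSet_eq_zero hM hMf (S.measurePreserving_Tinv hμ))

/-- assuming `h` twice differentiable at `0` with `h''(0) < 0`, for every
`t ∈ ℝ` and every `T`-invariant probability measure `μ`, `μ(S_t \ N_t) = 0`. -/
theorem stmt9 {Θ : Type*} [MeasurableSpace Θ] (S : Setting Θ)
    (hsecond : ∃ c : ℝ, c < 0 ∧ HasDerivWithinAt S.h' c (Set.Ici 0) 0)
    (M : ℝ → ℝ) (hM : ∀ t, 0 < M t) (hMf : ∀ t θ, S.f t θ (M t) < M t)
    (t : ℝ) (μ : Measure Θ) [IsProbabilityMeasure μ]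
    (hμ : MeasurePreserving S.T μ μ) :
    μ (S.Sset M t \ S.Nset t (M t)) = 0 :=
  stmt9_general S M hM hMf t μ hμ
end
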